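/- arXiv:1603.00784 — 3 statements merged into one kernel-verified Lean document; each statement's English description precedes it below -/
import Mathlib

section
/- Let (Z_t)_{t∈ℤ} be an i.i.d. sequence of random vectors in ℝ^K with mean zero and positive definite covariance matrix Σ. Let (Ψ_i)_{i∈ℤ} be real K×K matrices such that for every t the two-sided series X_t := ∑_{i∈ℤ} Ψ_i Z_{t−i} converges almost surely, and such that for every fixed index i₀ the partial series ∑_{i∈ℤ, i≠i₀} Ψ_i Z_{t−i} also converges almost surely. If for all integers s > t the random vector Z_s is independent of X_t, then Ψ_i = 0 for every i < 0. -/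
/-!
Fix `i₀ < 0` and put `s = -i₀`. Splitting the term of index `i₀` off the series for `X 0` gives
`X 0 = Ψ i₀ *ᵥ Z s + Y`, where `Y` is a limit of functions of the `Z u` with `u ≠ s` and is
therefore independent of `Z s`. For every `u`, the real variable `U = (u ᵥ* Ψ i₀) ⬝ᵥ Z s` is then
independent both of `V = u ⬝ᵥ Y` and of `U + V = u ⬝ᵥ X 0`, so the characteristic functions satisfy
`φ_V = |φ_U|² φ_V`. Hence `|φ_U| = 1` near `0`, and two frequencies with irrational ratio force `U`
to be almost surely constant. A centred random vector with positive definite covariance has no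
almost surely constant nonzero linear form, so `u ᵥ* Ψ i₀ = 0` for every `u`.
-/

open MeasureTheory ProbabilityTheory Filter Matrix
open scoped ComplexConjugate Topology

open Complex in
lemma ae_eq_cexp_of_norm_charFun_eq_one {μ : Measure ℝ} [IsProbabilityMeasure μ] {t : ℝ}
    (h : ‖charFun μ t‖ = 1) : ∀ᵐ x : ℝ ∂μ, cexp (t * x * I) = charFun μ t := by
  have hle : ∀ᵐ x : ℝ ∂μ, ‖cexp (t * x * I)‖ ≤ 1 :=
    ae_of_all _ fun x => by rw [← ofReal_mul, norm_exp_ofReal_mul_I]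
  rcases ae_eq_const_or_norm_integral_lt_of_norm_le_const hle with hconst | hlt
  · filter_upwards [hconst] with x hx
    simpa [average_eq_integral, ← charFun_apply_real] using hx
  · simp [← charFun_apply_real, h] at hlt

open Complex in
lemma eq_of_cexp_mul_I_eq_of_irrational_div {a b x y : ℝ} (hab : Irrational (a / b))
    (ha : cexp (a * x * I) = cexp (a * y * I)) (hb : cexp (b * x * I) = cexp (b * y * I)) :
    x = y := by
  obtain ⟨m, hm⟩ := exp_eq_exp_iff_exists_int.1 ha
  obtain ⟨n, hn⟩ := exp_eq_exp_iff_exists_int.1 hb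
  have hm' : a * x = a * y + m * (2 * Real.pi) := by simpa using congrArg im hm
  have hn' : b * x = b * y + n * (2 * Real.pi) := by simpa using congrArg im hn
  by_contra hxy
  have hb0 : b ≠ 0 := by rintro rfl; simp at hab
  have hn0 : (n : ℝ) ≠ 0 := by
    rintro h0
    exact mul_ne_zero hb0 (sub_ne_zero.2 hxy) (by linear_combination hn' + (2 * Real.pi) * h0)
  have hcross : (m * b - a * n) * (2 * Real.pi) = 0 := by linear_combination a * hn' - b * hm'
  refine hab ⟨m / n, ?_⟩
  push_cast
  rw [div_eq_div_iff hn0 hb0]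
  linarith [(mul_eq_zero.1 hcross).resolve_right (by positivity)]

lemma exists_ae_eq_const_of_norm_charFun_eq_one {μ : Measure ℝ} [IsProbabilityMeasure μ] {ε : ℝ}
    (hε : 0 < ε) (h : ∀ t, |t| < ε → ‖charFun μ t‖ = 1) : ∃ c, ∀ᵐ x ∂μ, x = c := by
  have hsmall : |ε / 2| < ε := by rw [abs_of_pos (by positivity)]; linarith
  have hsmaller : |ε / 2 / √2| < ε := by
    rw [abs_of_pos (by positivity)]
    exact (div_le_self (by positivity) Real.one_lt_sqrt_two.le).trans_lt (by linarith)
  have hirr : Irrational (ε / 2 / (ε / 2 / √2)) := by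
    rw [div_div_cancel₀ (by positivity)]
    exact irrational_sqrt_two
  have hae := (ae_eq_cexp_of_norm_charFun_eq_one (h _ hsmall)).and
    (ae_eq_cexp_of_norm_charFun_eq_one (h _ hsmaller))
  obtain ⟨y, hy₁, hy₂⟩ := hae.exists
  refine ⟨y, ?_⟩
  filter_upwards [hae] with x ⟨hx₁, hx₂⟩
  exact eq_of_cexp_mul_I_eq_of_irrational_div hirr (hx₁.trans hy₁.symm) (hx₂.trans hy₂.symm)

lemma measurable_dotProduct_const {k : Type*} [Fintype k] (w : k → ℝ) :
    Measurable fun x : k → ℝ => w ⬝ᵥ x :=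
  (continuous_const.dotProduct continuous_id).measurable

section

variable {Ω : Type*} [MeasurableSpace Ω] {P : Measure Ω} {m n : Type*} [Fintype m] [Fintype n]

lemma charFun_map_eq_conj_mul_of_indepFun_add [IsFiniteMeasure P] {U V : Ω → ℝ}
    (hU : AEMeasurable U P) (hV : AEMeasurable V P) (hUV : U ⟂ᵢ[P] V) (hUW : U ⟂ᵢ[P] (U + V))
    (t : ℝ) : charFun (P.map V) t =
      conj (charFun (P.map U) t) * charFun (P.map U) t * charFun (P.map V) t := by
  have hneg : (fun ω => -1 * U ω) ⟂ᵢ[P] (U + V) := hUW.comp (measurable_const_mul _) measurable_id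
  have h := congrFun (hneg.charFun_map_fun_add_eq_mul (hU.const_mul _) (hU.add hV)) t
  have hsum : (fun ω => -1 * U ω + (U + V) ω) = V := by ext; simp
  rwa [hsum, Pi.mul_apply, charFun_map_mul_comp hU, hUV.charFun_map_add_eq_mul hU hV, Pi.mul_apply,
    neg_one_mul, charFun_neg, ← mul_assoc] at h

lemma exists_ae_eq_const_of_indepFun_of_indepFun_add [IsProbabilityMeasure P] {U V : Ω → ℝ}
    (hU : AEMeasurable U P) (hV : AEMeasurable V P) (hUV : U ⟂ᵢ[P] V) (hUW : U ⟂ᵢ[P] (U + V)) :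
    ∃ c, ∀ᵐ ω ∂P, U ω = c := by
  have := Measure.isProbabilityMeasure_map hU
  have := Measure.isProbabilityMeasure_map hV
  obtain ⟨ε, hε, hne⟩ : ∃ ε > 0, ∀ t, |t| < ε → charFun (P.map V) t ≠ 0 := by
    have := ((continuous_charFun (μ := P.map V)).continuousAt (x := 0)).eventually_ne
      (by simp : charFun (P.map V) 0 ≠ 0)
    simpa [Metric.eventually_nhds_iff, Real.dist_0_eq_abs] using this
  obtain ⟨c, hc⟩ := exists_ae_eq_const_of_norm_charFun_eq_one hε fun t ht => by
    have h := charFun_map_eq_conj_mul_of_indepFun_add hU hV hUV hUW t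
    rw [Complex.conj_mul', eq_comm, mul_eq_right₀ (hne t ht)] at h
    exact (pow_eq_one_iff_of_nonneg (norm_nonneg _) two_ne_zero).1 (mod_cast h)
  exact ⟨c, ae_of_ae_map hU hc⟩

lemma exists_ae_vecMul_dotProduct_eq_const [IsProbabilityMeasure P] {Z : Ω → n → ℝ}
    {Y : Ω → m → ℝ} (A : Matrix m n ℝ) (hZ : AEMeasurable Z P) (hY : AEMeasurable Y P)
    (hZY : Z ⟂ᵢ[P] Y) (hZX : Z ⟂ᵢ[P] (fun ω => A *ᵥ Z ω + Y ω)) (u : m → ℝ) :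
    ∃ c, ∀ᵐ ω ∂P, (u ᵥ* A) ⬝ᵥ Z ω = c := by
  have hsum : (fun ω => (u ᵥ* A) ⬝ᵥ Z ω) + (fun ω => u ⬝ᵥ Y ω) =
      fun ω => u ⬝ᵥ (A *ᵥ Z ω + Y ω) := by
    ext ω
    simp [dotProduct_add, dotProduct_mulVec]
  refine exists_ae_eq_const_of_indepFun_of_indepFun_add (V := fun ω => u ⬝ᵥ Y ω)
    ((measurable_dotProduct_const (u ᵥ* A)).comp_aemeasurable hZ)
    ((measurable_dotProduct_const u).comp_aemeasurable hY)
    (hZY.comp (measurable_dotProduct_const (u ᵥ* A)) (measurable_dotProduct_const u)) ?_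
  rw [hsum]
  exact hZX.comp (measurable_dotProduct_const (u ᵥ* A)) (measurable_dotProduct_const u)

lemma eq_zero_of_ae_dotProduct_eq_const [IsFiniteMeasure P] {Z : Ω → n → ℝ}
    (hZ : AEMeasurable Z P) {S : Matrix n n ℝ} (hS : S.PosDef)
    (hmean : ∀ i, ∫ ω, Z ω i ∂P = 0) (hcov : ∀ i j, ∫ ω, Z ω i * Z ω j ∂P = S i j)
    {b : n → ℝ} {c : ℝ} (h : ∀ᵐ ω ∂P, b ⬝ᵥ Z ω = c) : b = 0 := by
  have hL2 : ∀ i, MemLp (fun ω => Z ω i) 2 P := fun i => by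
    have hZi : AEStronglyMeasurable (fun ω => Z ω i) P :=
      ((measurable_pi_apply i).comp_aemeasurable hZ).aestronglyMeasurable
    refine (memLp_two_iff_integrable_sq hZi).2 (by_contra fun hi => ?_)
    have := hcov i i
    simp only [sq] at hi
    rw [integral_undef hi] at this
    exact hS.diag_pos.ne this
  have hprod : ∀ i j, Integrable (fun ω => Z ω i * Z ω j) P :=
    fun i j => (hL2 i).integrable_mul (hL2 j)
  have hmean_dot : ∫ ω, b ⬝ᵥ Z ω ∂P = 0 := by
    simp only [dotProduct]
    rw [integral_finsetSum _ fun i _ => ((hL2 i).integrable one_le_two).const_mul _]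
    simp [integral_const_mul, hmean]
  have hquad : b ⬝ᵥ (S *ᵥ b) = 0 := by
    calc b ⬝ᵥ (S *ᵥ b) = ∫ ω, ∑ i, ∑ j, b i * b j * (Z ω i * Z ω j) ∂P := by
          rw [integral_finsetSum _ fun i _ => integrable_finsetSum _ fun j _ =>
            (hprod i j).const_mul _]
          simp only [integral_finsetSum _ fun j _ => (hprod _ j).const_mul _, integral_const_mul,
            hcov, dotProduct, mulVec, Finset.mul_sum]
          exact Finset.sum_congr rfl fun i _ => Finset.sum_congr rfl fun j _ => by ring
      _ = ∫ ω, (b ⬝ᵥ Z ω) * (b ⬝ᵥ Z ω) ∂P := by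
          simp only [dotProduct, Finset.sum_mul_sum]
          exact integral_congr_ae (ae_of_all _ fun ω =>
            Finset.sum_congr rfl fun i _ => Finset.sum_congr rfl fun j _ => by ring)
      _ = ∫ ω, c * (b ⬝ᵥ Z ω) ∂P := integral_congr_ae (h.mono fun ω hω => by simp only [hω])
      _ = 0 := by rw [integral_const_mul, hmean_dot, mul_zero]
  by_contra hb
  simpa [hquad] using hS.dotProduct_mulVec_pos hb

end

lemma ProbabilityTheory.iIndepFun.indepFun_limUnder {Ω ι β E : Type*} {mΩ : MeasurableSpace Ω}
    {P : Measure Ω} [MeasurableSpace β] [TopologicalSpace E] [PolishSpace E] [Nonempty E]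
    [MeasurableSpace E] [BorelSpace E] {Z : ι → Ω → β} (hZmeas : ∀ i, Measurable (Z i))
    (hZ : iIndepFun Z P) (s : ι) {W : ℕ → Ω → E}
    (hW : ∀ n, Measurable[⨆ i ∈ ({s}ᶜ : Set ι), MeasurableSpace.comap (Z i) inferInstance] (W n)) :
    Z s ⟂ᵢ[P] (fun ω => limUnder atTop (W · ω)) := by
  let 𝓖 := ⨆ i ∈ ({s}ᶜ : Set ι), MeasurableSpace.comap (Z i) inferInstance
  have hY : Measurable[𝓖] (fun ω => limUnder atTop (W · ω)) :=
    (@StronglyMeasurable.limUnder _ _ _ 𝓖 _ _ _ _ _ _ _ fun n =>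
      (hW n).stronglyMeasurable).measurable
  rw [IndepFun_iff_Indep]
  refine indep_of_indep_of_le_right (indep_of_indep_of_le_left
    (indep_biSup_compl (fun i => (hZmeas i).comap_le) hZ.iIndep {s}) ?_) hY.comap_le
  exact le_biSup (fun i => MeasurableSpace.comap (Z i) inferInstance) (Set.mem_singleton s)

lemma eq_add_of_tendsto_sum_Icc_of_tendsto_sum_erase {E : Type*} [AddCommGroup E]
    [TopologicalSpace E] [ContinuousAdd E] [T2Space E] {f : ℤ → E} {i₀ : ℤ} {x y : E}
    (hx : Tendsto (fun n : ℕ => ∑ i ∈ Finset.Icc (-(n : ℤ)) n, f i) atTop (𝓝 x))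
    (hy : Tendsto (fun n : ℕ => ∑ i ∈ (Finset.Icc (-(n : ℤ)) n).erase i₀, f i) atTop (𝓝 y)) :
    x = f i₀ + y := by
  refine tendsto_nhds_unique hx ((hy.const_add (f i₀)).congr' ?_)
  filter_upwards [eventually_ge_atTop i₀.natAbs] with n hn
  exact Finset.add_sum_erase _ f (Finset.mem_Icc.2 ⟨by omega, by omega⟩)

theorem two_sided_representation_indep_implies_causal_general
    {Ω : Type*} [MeasurableSpace Ω] (P : Measure Ω) [IsProbabilityMeasure P]
    (K : ℕ) (Z : ℤ → Ω → (Fin K → ℝ))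
    (hZmeas : ∀ t, Measurable (Z t))
    (hZindep : iIndepFun Z P)
    (S : Matrix (Fin K) (Fin K) ℝ) (hS : S.PosDef)
    (hmean : ∀ t i, ∫ ω, Z t ω i ∂P = 0)
    (hcov : ∀ t i j, ∫ ω, Z t ω i * Z t ω j ∂P = S i j)
    (Ψ : ℤ → Matrix (Fin K) (Fin K) ℝ)
    (X : ℤ → Ω → (Fin K → ℝ))
    (hX : ∀ t : ℤ, ∀ᵐ ω ∂P,
      Tendsto (fun n : ℕ => ∑ i ∈ Finset.Icc (-(n : ℤ)) (n : ℤ), (Ψ i) *ᵥ (Z (t - i) ω))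
        atTop (nhds (X t ω)))
    (hX' : ∀ (i₀ t : ℤ), ∀ᵐ ω ∂P, ∃ y : Fin K → ℝ,
      Tendsto
        (fun n : ℕ => ∑ i ∈ (Finset.Icc (-(n : ℤ)) (n : ℤ)).erase i₀, (Ψ i) *ᵥ (Z (t - i) ω))
        atTop (nhds y))
    (hindep : ∀ s t : ℤ, t < s → IndepFun (Z s) (X t) P) :
    ∀ i : ℤ, i < 0 → Ψ i = 0 := by
  intro i₀ hi₀
  let W : ℕ → Ω → Fin K → ℝ := fun n ω =>
    ∑ i ∈ (Finset.Icc (-(n : ℤ)) n).erase i₀, Ψ i *ᵥ Z (0 - i) ω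
  let Y : Ω → Fin K → ℝ := fun ω => limUnder atTop (W · ω)
  have hW : ∀ n, Measurable[⨆ u ∈ ({0 - i₀}ᶜ : Set ℤ), MeasurableSpace.comap (Z u) inferInstance]
      (W n) := fun n => Finset.measurable_sum _ fun i hi =>
    (Continuous.measurable (by fun_prop : Continuous fun v : Fin K → ℝ => Ψ i *ᵥ v)).comp <|
      measurable_iff_comap_le.2 <| le_biSup (fun u => MeasurableSpace.comap (Z u) inferInstance)
        (show 0 - i ∈ ({0 - i₀}ᶜ : Set ℤ) by simpa using Finset.ne_of_mem_erase hi)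
  have hY : Measurable Y := (StronglyMeasurable.limUnder fun n =>
    ((hW n).mono (iSup₂_le fun u _ => (hZmeas u).comap_le) le_rfl).stronglyMeasurable).measurable
  have hXY : X 0 =ᵐ[P] fun ω => Ψ i₀ *ᵥ Z (0 - i₀) ω + Y ω := by
    filter_upwards [hX 0, hX' i₀ 0] with ω hx hy
    exact eq_add_of_tendsto_sum_Icc_of_tendsto_sum_erase hx (tendsto_nhds_limUnder hy)
  have hZY := hZindep.indepFun_limUnder hZmeas (0 - i₀) hW
  have hZX := (hindep (0 - i₀) 0 (by omega)).congr (.refl _ _) hXY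
  ext j k
  obtain ⟨c, hc⟩ := exists_ae_vecMul_dotProduct_eq_const (Ψ i₀) (hZmeas _).aemeasurable
    hY.aemeasurable hZY hZX (Pi.single j 1)
  simpa using congrFun (eq_zero_of_ae_dotProduct_eq_const (hZmeas _).aemeasurable hS
    (hmean _) (hcov _) hc) k

/-- If an i.i.d. mean-zero sequence `(Z t)` with positive definite covariance `S`
gives a two-sided moving-average representation `X t = ∑_{i ∈ ℤ} Ψ i *ᵥ Z (t - i)` (converging
almost surely, and still converging after removing any single term), and every innovation `Z s`
is independent of every preceding value `X t` (`t < s`), then all anticipative coefficients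
vanish: `Ψ i = 0` for `i < 0`. -/
theorem two_sided_representation_indep_implies_causal
    {Ω : Type*} [MeasurableSpace Ω] (P : Measure Ω) [IsProbabilityMeasure P]
    (K : ℕ) (Z : ℤ → Ω → (Fin K → ℝ))
    (hZmeas : ∀ t, Measurable (Z t))
    (hZindep : iIndepFun Z P)
    (hZident : ∀ s t : ℤ, P.map (Z s) = P.map (Z t))
    (S : Matrix (Fin K) (Fin K) ℝ) (hS : S.PosDef)
    (hmean : ∀ t i, ∫ ω, Z t ω i ∂P = 0)
    (hcov : ∀ t i j, ∫ ω, Z t ω i * Z t ω j ∂P = S i j)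
    (Ψ : ℤ → Matrix (Fin K) (Fin K) ℝ)
    (X : ℤ → Ω → (Fin K → ℝ))
    (hX : ∀ t : ℤ, ∀ᵐ ω ∂P,
      Tendsto (fun n : ℕ => ∑ i ∈ Finset.Icc (-(n : ℤ)) (n : ℤ), (Ψ i) *ᵥ (Z (t - i) ω))
        atTop (nhds (X t ω)))
    (hX' : ∀ (i₀ t : ℤ), ∀ᵐ ω ∂P, ∃ y : Fin K → ℝ,
      Tendsto
        (fun n : ℕ => ∑ i ∈ (Finset.Icc (-(n : ℤ)) (n : ℤ)).erase i₀, (Ψ i) *ᵥ (Z (t - i) ω))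
        atTop (nhds y))
    (hindep : ∀ s t : ℤ, t < s → IndepFun (Z s) (X t) P) :
    ∀ i : ℤ, i < 0 → Ψ i = 0 :=
  two_sided_representation_indep_implies_causal_general P K Z hZmeas hZindep S hS hmean hcov Ψ X hX
    hX' hindep
end

section
/- Let (Z_t)_{t∈ℤ} be an i.i.d. sequence of random vectors in ℝ^K with mean zero and finite covariance, let Φ be a real K×K matrix all of whose complex eigenvalues have modulus strictly less than 1, and suppose X_t := ∑_{j=0}^∞ Φ^j Z_{t−j} converges almost surely and in L², so that X_t = ΦX_{t−1} + Z_t. Assume Γ₀ := E[X_t X_tᵀ] is invertible, set C₁ := E[X_t X_{t+1}ᵀ] and define Z̃_t := X_t − C₁Γ₀⁻¹ X_{t+1}. Then for every integer k ≥ 1, E[Z̃_t X_{t+k}ᵀ] = 0, i.e. the backward residual Z̃_t is uncorrelated with every future value X_{t+k}. -/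
open MeasureTheory ProbabilityTheory Filter Matrix
open scoped ENNReal Topology

/-!
The causal representation makes `X t` an L²-limit of linear combinations of the innovations
`Z s`, `s ≤ t`, so by independence and zero mean `X t` is uncorrelated with every later
innovation. Multiplying `X (u + 1) = Φ X u + Z (u + 1)` by `X s`, `s ≤ u`, and taking
expectations gives the Yule–Walker relation `E[X_s X_{u+1}ᵀ] = E[X_s X_uᵀ] Φᵀ`, hence
`E[X_s X_{s+m}ᵀ] = Γ₀ (Φᵀ)^m` and `C₁ = Γ₀ Φᵀ`. For `k = m + 1` the residual's cross moment with
`X (t + k)` is then `Γ₀ (Φᵀ)^(m+1) - Γ₀ Φᵀ Γ₀⁻¹ Γ₀ (Φᵀ)^m = 0`.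
-/

noncomputable def crossMoment {Ω ι κ : Type*} [MeasurableSpace Ω] (P : Measure Ω) (U : Ω → ι → ℝ)
    (V : Ω → κ → ℝ) : Matrix ι κ ℝ :=
  Matrix.of fun i j => ∫ ω, U ω i * V ω j ∂P

section Lp

variable {Ω : Type*} [MeasurableSpace Ω] {P : Measure Ω}

lemma memLp_of_tendsto_eLpNorm_sub {E α : Type*} [NormedAddCommGroup E] {l : Filter α} [l.NeBot]
    {p : ℝ≥0∞} {f : Ω → E} {g : α → Ω → E} (hf : AEStronglyMeasurable f P)
    (hg : ∀ n, MemLp (g n) p P)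
    (hlim : Tendsto (fun n => eLpNorm (fun ω => f ω - g n ω) p P) l (𝓝 0)) :
    MemLp f p P := by
  obtain ⟨n, hn⟩ := (hlim.eventually_lt_const zero_lt_one).exists
  have hdiff : MemLp (fun ω => f ω - g n ω) p P :=
    ⟨hf.sub (hg n).1, hn.trans ENNReal.one_lt_top⟩
  convert hdiff.add (hg n) using 1
  ext ω
  simp

lemma tendsto_integral_mul_of_tendsto_eLpNorm {α : Type*} {l : Filter α} {f h : Ω → ℝ}
    {g : α → Ω → ℝ} (hf : MemLp f 2 P) (hg : ∀ n, MemLp (g n) 2 P) (hh : MemLp h 2 P)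
    (hlim : Tendsto (fun n => eLpNorm (fun ω => f ω - g n ω) 2 P) l (𝓝 0)) :
    Tendsto (fun n => ∫ ω, g n ω * h ω ∂P) l (𝓝 (∫ ω, f ω * h ω ∂P)) := by
  refine tendsto_integral_of_L1 _ (hf.integrable_mul hh).1
    (Eventually.of_forall fun n => (hg n).integrable_mul hh) ?_
  have hbound : ∀ n, ∫⁻ ω, ‖g n ω * h ω - f ω * h ω‖ₑ ∂P
      ≤ eLpNorm (fun ω => f ω - g n ω) 2 P * eLpNorm h 2 P := by
    intro n
    rw [← eLpNorm_one_eq_lintegral_enorm]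
    have heq : (fun ω => g n ω * h ω - f ω * h ω) = -((fun ω => f ω - g n ω) • h) := by
      ext ω
      change _ = -((f ω - g n ω) * h ω)
      ring
    rw [heq, eLpNorm_neg]
    exact eLpNorm_smul_le_mul_eLpNorm hh.1 (hf.1.sub (hg n).1)
  have hprod :
      Tendsto (fun n => eLpNorm (fun ω => f ω - g n ω) 2 P * eLpNorm h 2 P) l (𝓝 0) := by
    simpa using ENNReal.Tendsto.mul_const hlim (Or.inr hh.eLpNorm_ne_top)
  exact tendsto_of_tendsto_of_tendsto_of_le_of_le tendsto_const_nhds hprod (fun _ => zero_le)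
    hbound

end Lp

section CrossMoment

variable {Ω ι κ : Type*} [MeasurableSpace Ω] {P : Measure Ω} {U U' : Ω → ι → ℝ}
  {V W : Ω → κ → ℝ}

lemma integrable_apply_mul_apply (hU : ∀ i, MemLp (fun ω => U ω i) 2 P)
    (hV : ∀ j, MemLp (fun ω => V ω j) 2 P) (i : ι) (j : κ) :
    Integrable (fun ω => U ω i * V ω j) P :=
  (hU i).integrable_mul (hV j)

lemma memLp_mulVec_apply [Fintype κ] (A : Matrix ι κ ℝ) (hV : ∀ j, MemLp (fun ω => V ω j) 2 P)
    (i : ι) : MemLp (fun ω => (A *ᵥ V ω) i) 2 P :=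
  memLp_finsetSum _ fun j _ => (hV j).const_mul (A i j)

lemma crossMoment_sub_left (hU : ∀ i, MemLp (fun ω => U ω i) 2 P)
    (hU' : ∀ i, MemLp (fun ω => U' ω i) 2 P) (hV : ∀ j, MemLp (fun ω => V ω j) 2 P) :
    crossMoment P (fun ω => U ω - U' ω) V = crossMoment P U V - crossMoment P U' V := by
  ext i j
  simp only [crossMoment, of_apply, Matrix.sub_apply, Pi.sub_apply, sub_mul]
  exact integral_sub (integrable_apply_mul_apply hU hV i j) (integrable_apply_mul_apply hU' hV i j)

lemma crossMoment_add_right (hU : ∀ i, MemLp (fun ω => U ω i) 2 P)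
    (hV : ∀ j, MemLp (fun ω => V ω j) 2 P) (hW : ∀ j, MemLp (fun ω => W ω j) 2 P) :
    crossMoment P U (fun ω => V ω + W ω) = crossMoment P U V + crossMoment P U W := by
  ext i j
  simp only [crossMoment, of_apply, Matrix.add_apply, Pi.add_apply, mul_add]
  exact integral_add (integrable_apply_mul_apply hU hV i j) (integrable_apply_mul_apply hU hW i j)

lemma crossMoment_sum_left {α : Type*} (s : Finset α) {U : α → Ω → ι → ℝ}
    (hU : ∀ a ∈ s, ∀ i, MemLp (fun ω => U a ω i) 2 P) (hV : ∀ j, MemLp (fun ω => V ω j) 2 P) :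
    crossMoment P (fun ω => ∑ a ∈ s, U a ω) V = ∑ a ∈ s, crossMoment P (U a) V := by
  ext i j
  simp only [crossMoment, of_apply, Matrix.sum_apply, Finset.sum_apply, Finset.sum_mul]
  exact integral_finsetSum _ fun a ha => integrable_apply_mul_apply (hU a ha) hV i j

lemma crossMoment_mulVec_left {ι' : Type*} [Fintype ι] (A : Matrix ι' ι ℝ)
    (hU : ∀ i, MemLp (fun ω => U ω i) 2 P) (hV : ∀ j, MemLp (fun ω => V ω j) 2 P) :
    crossMoment P (fun ω => A *ᵥ U ω) V = A * crossMoment P U V := by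
  ext i j
  simp only [crossMoment, of_apply, mul_apply, mulVec, dotProduct, Finset.sum_mul, mul_assoc]
  refine (integral_finsetSum _ fun l _ =>
    (integrable_apply_mul_apply hU hV l j).const_mul _).trans ?_
  simp only [integral_const_mul]

lemma crossMoment_mulVec_right {κ' : Type*} [Fintype κ] (A : Matrix κ' κ ℝ)
    (hU : ∀ i, MemLp (fun ω => U ω i) 2 P) (hV : ∀ j, MemLp (fun ω => V ω j) 2 P) :
    crossMoment P U (fun ω => A *ᵥ V ω) = crossMoment P U V * Aᵀ := by
  ext i j
  simp only [crossMoment, of_apply, mul_apply, transpose_apply, mulVec, dotProduct,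
    Finset.mul_sum, mul_left_comm (U _ i)]
  refine (integral_finsetSum _ fun l _ =>
    (integrable_apply_mul_apply hU hV i l).const_mul _).trans ?_
  simp only [integral_const_mul, mul_comm]

lemma crossMoment_congr_right (h : V =ᵐ[P] W) : crossMoment P U V = crossMoment P U W := by
  ext i j
  refine integral_congr_ae ?_
  filter_upwards [h] with ω hω
  rw [hω]

lemma crossMoment_eq_zero_of_indepFun (hUV : U ⟂ᵢ[P] V)
    (hU : ∀ i, AEStronglyMeasurable (fun ω => U ω i) P)
    (hV : ∀ j, AEStronglyMeasurable (fun ω => V ω j) P) (hmean : ∀ i, ∫ ω, U ω i ∂P = 0) :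
    crossMoment P U V = 0 := by
  ext i j
  have hij : (fun ω => U ω i) ⟂ᵢ[P] (fun ω => V ω j) :=
    hUV.comp (measurable_pi_apply i) (measurable_pi_apply j)
  simpa [crossMoment, hmean] using hij.integral_mul_eq_mul_integral (hU i) (hV j)

lemma crossMoment_eq_zero_of_tendsto {α : Type*} {l : Filter α} [l.NeBot] {G : α → Ω → ι → ℝ}
    (hU : ∀ i, MemLp (fun ω => U ω i) 2 P) (hG : ∀ n i, MemLp (fun ω => G n ω i) 2 P)
    (hV : ∀ j, MemLp (fun ω => V ω j) 2 P)
    (hlim : ∀ i, Tendsto (fun n => eLpNorm (fun ω => U ω i - G n ω i) 2 P) l (𝓝 0))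
    (hzero : ∀ n, crossMoment P (G n) V = 0) :
    crossMoment P U V = 0 := by
  ext i j
  have h := tendsto_integral_mul_of_tendsto_eLpNorm (hU i) (fun n => hG n i) (hV j) (hlim i)
  have h0 : ∀ n, ∫ ω, G n ω i * V ω j ∂P = 0 := fun n => congr($(hzero n) i j)
  simp only [h0] at h
  exact tendsto_nhds_unique h tendsto_const_nhds

end CrossMoment

structure IsCausalVAR1 {Ω ι : Type*} [MeasurableSpace Ω] [Fintype ι] [DecidableEq ι]
    (P : Measure Ω) (Φ : Matrix ι ι ℝ) (Z X : ℤ → Ω → ι → ℝ) : Prop where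
  iIndepFun_innov : iIndepFun Z P
  integral_innov : ∀ t i, ∫ ω, Z t ω i ∂P = 0
  memLp_innov : ∀ t i, MemLp (fun ω => Z t ω i) 2 P
  measurable : ∀ t, Measurable (X t)
  tendsto_eLpNorm_sub_partialSum : ∀ t i, Tendsto
    (fun n => eLpNorm (fun ω => X t ω i - (∑ j ∈ Finset.range n, (Φ ^ j) *ᵥ Z (t - j) ω) i) 2 P)
    atTop (𝓝 0)
  ae_eq_recursion : ∀ t, ∀ᵐ ω ∂P, X t ω = Φ *ᵥ X (t - 1) ω + Z t ω

namespace IsCausalVAR1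

variable {Ω ι : Type*} [MeasurableSpace Ω] [Fintype ι] [DecidableEq ι] {P : Measure Ω}
  {Φ : Matrix ι ι ℝ} {Z X : ℤ → Ω → ι → ℝ}

lemma memLp_partialSum (h : IsCausalVAR1 P Φ Z X) (t : ℤ) (n : ℕ) (i : ι) :
    MemLp (fun ω => (∑ j ∈ Finset.range n, (Φ ^ j) *ᵥ Z (t - j) ω) i) 2 P := by
  simp only [Finset.sum_apply]
  exact memLp_finsetSum _ fun j _ => memLp_mulVec_apply _ (h.memLp_innov _) i

lemma memLp (h : IsCausalVAR1 P Φ Z X) (t : ℤ) (i : ι) : MemLp (fun ω => X t ω i) 2 P :=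
  memLp_of_tendsto_eLpNorm_sub ((measurable_pi_apply i).comp (h.measurable t)).aestronglyMeasurable
    (fun n => h.memLp_partialSum t n i) (h.tendsto_eLpNorm_sub_partialSum t i)

lemma crossMoment_innov_eq_zero (h : IsCausalVAR1 P Φ Z X) {t u : ℤ} (htu : t < u) :
    crossMoment P (X t) (Z u) = 0 := by
  refine crossMoment_eq_zero_of_tendsto (h.memLp t) (h.memLp_partialSum t) (h.memLp_innov u)
    (h.tendsto_eLpNorm_sub_partialSum t) fun n => ?_
  rw [crossMoment_sum_left _ (fun j _ => memLp_mulVec_apply _ (h.memLp_innov _))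
    (h.memLp_innov u)]
  refine Finset.sum_eq_zero fun j _ => ?_
  rw [crossMoment_mulVec_left _ (h.memLp_innov _) (h.memLp_innov u),
    crossMoment_eq_zero_of_indepFun (h.iIndepFun_innov.indepFun (by omega))
      (fun i => (h.memLp_innov _ i).1) (fun i => (h.memLp_innov u i).1) (h.integral_innov _),
    Matrix.mul_zero]

lemma crossMoment_succ (h : IsCausalVAR1 P Φ Z X) {s u : ℤ} (hsu : s ≤ u) :
    crossMoment P (X s) (X (u + 1)) = crossMoment P (X s) (X u) * Φᵀ := by
  have hrec := h.ae_eq_recursion (u + 1)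
  simp only [add_sub_cancel_right] at hrec
  rw [crossMoment_congr_right hrec,
    crossMoment_add_right (h.memLp s) (memLp_mulVec_apply _ (h.memLp u)) (h.memLp_innov _),
    crossMoment_mulVec_right _ (h.memLp s) (h.memLp u), h.crossMoment_innov_eq_zero (by omega),
    add_zero]

lemma crossMoment_add_nat (h : IsCausalVAR1 P Φ Z X) (s : ℤ) (m : ℕ) :
    crossMoment P (X s) (X (s + m)) = crossMoment P (X s) (X s) * Φᵀ ^ m := by
  induction m with
  | zero => simp
  | succ m ih =>
    rw [Nat.cast_succ, ← add_assoc, h.crossMoment_succ (by omega), ih, pow_succ, Matrix.mul_assoc]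

end IsCausalVAR1

theorem backward_residual_uncorrelated_with_future_general
    {Ω : Type*} [MeasurableSpace Ω] (P : Measure Ω)
    (K : ℕ) (Z : ℤ → Ω → (Fin K → ℝ))
    (hZindep : iIndepFun Z P)
    (hmean : ∀ t i, ∫ ω, Z t ω i ∂P = 0)
    (hZL2 : ∀ t i, MemLp (fun ω => Z t ω i) 2 P)
    (Φ : Matrix (Fin K) (Fin K) ℝ)
    (X : ℤ → Ω → (Fin K → ℝ))
    (hXmeas : ∀ t, Measurable (X t))
    (hconvL2 : ∀ (t : ℤ) (i : Fin K),
      Tendsto (fun n =>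
          eLpNorm (fun ω => X t ω i - (∑ j ∈ Finset.range n, (Φ ^ j) *ᵥ (Z (t - (j : ℤ)) ω)) i)
            2 P)
        atTop (nhds 0))
    (hrec : ∀ t : ℤ, ∀ᵐ ω ∂P, X t ω = Φ *ᵥ (X (t - 1) ω) + Z t ω)
    (hstat : ∀ (t k : ℤ) (i j : Fin K),
      ∫ ω, X t ω i * X (t + k) ω j ∂P = ∫ ω, X 0 ω i * X k ω j ∂P)
    (Γ₀ C₁ : Matrix (Fin K) (Fin K) ℝ)
    (hΓ₀ : ∀ i j, Γ₀ i j = ∫ ω, X 0 ω i * X 0 ω j ∂P)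
    (hΓ₀inv : IsUnit Γ₀)
    (hC₁ : ∀ i j, C₁ i j = ∫ ω, X 0 ω i * X 1 ω j ∂P) :
    ∀ (t k : ℤ), 1 ≤ k → ∀ (i j : Fin K),
      ∫ ω, (X t ω - (C₁ * Γ₀⁻¹) *ᵥ (X (t + 1) ω)) i * X (t + k) ω j ∂P = 0 := by
  have hVAR : IsCausalVAR1 P Φ Z X := ⟨hZindep, hmean, hZL2, hXmeas, hconvL2, hrec⟩
  have hΓ : ∀ t, crossMoment P (X t) (X t) = Γ₀ := fun t => by
    ext i j
    simpa [crossMoment, hΓ₀] using hstat t 0 i j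
  have hC : C₁ = Γ₀ * Φᵀ := by
    rw [← hΓ 0, ← pow_one Φᵀ, ← hVAR.crossMoment_add_nat]
    ext i j
    simp [crossMoment, hC₁]
  intro t k hk i j
  obtain ⟨m, rfl⟩ : ∃ m : ℕ, k = m + 1 := ⟨(k - 1).toNat, by omega⟩
  have hres : crossMoment P (fun ω => X t ω - (C₁ * Γ₀⁻¹) *ᵥ X (t + 1) ω) (X (t + (m + 1 : ℕ)))
      = 0 := by
    rw [crossMoment_sub_left (hVAR.memLp t) (memLp_mulVec_apply _ (hVAR.memLp _))
        (hVAR.memLp _), crossMoment_mulVec_left _ (hVAR.memLp _) (hVAR.memLp _),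
      hVAR.crossMoment_add_nat, show t + (m + 1 : ℕ) = t + 1 + m by push_cast; ring,
      hVAR.crossMoment_add_nat, hΓ, hΓ, hC, Matrix.mul_assoc, Matrix.mul_assoc,
      Γ₀.nonsing_inv_mul_cancel_left _ ((isUnit_iff_isUnit_det Γ₀).mp hΓ₀inv), pow_succ',
      sub_self]
  simpa [crossMoment] using congr($hres i j)

/-- For a causal VAR(1) process `X t = Φ *ᵥ X (t-1) + Z t` with i.i.d. mean-zero
square-integrable innovations and invertible `Γ₀ = E[X_t X_tᵀ]`, the backward residual
`Z̃ t = X t - C₁ Γ₀⁻¹ X (t+1)` (with `C₁ = E[X_t X_{t+1}ᵀ]`) is uncorrelated with every future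
value `X (t+k)`, `k ≥ 1`. -/
theorem backward_residual_uncorrelated_with_future
    {Ω : Type*} [MeasurableSpace Ω] (P : Measure Ω) [IsProbabilityMeasure P]
    (K : ℕ) (Z : ℤ → Ω → (Fin K → ℝ))
    (hZmeas : ∀ t, Measurable (Z t))
    (hZindep : iIndepFun Z P)
    (hZident : ∀ s t : ℤ, P.map (Z s) = P.map (Z t))
    (hmean : ∀ t i, ∫ ω, Z t ω i ∂P = 0)
    (hZL2 : ∀ t i, MemLp (fun ω => Z t ω i) 2 P)
    (Φ : Matrix (Fin K) (Fin K) ℝ)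
    (heig : ∀ z : ℂ,
      (z • (1 : Matrix (Fin K) (Fin K) ℂ) - Φ.map (Complex.ofReal : ℝ → ℂ)).det = 0 → ‖z‖ < 1)
    (X : ℤ → Ω → (Fin K → ℝ))
    (hXmeas : ∀ t, Measurable (X t))
    (hconv : ∀ t : ℤ, ∀ᵐ ω ∂P,
      Tendsto (fun n => ∑ j ∈ Finset.range n, (Φ ^ j) *ᵥ (Z (t - (j : ℤ)) ω))
        atTop (nhds (X t ω)))
    (hconvL2 : ∀ (t : ℤ) (i : Fin K),
      Tendsto (fun n =>
          eLpNorm (fun ω => X t ω i - (∑ j ∈ Finset.range n, (Φ ^ j) *ᵥ (Z (t - (j : ℤ)) ω)) i)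
            2 P)
        atTop (nhds 0))
    (hrec : ∀ t : ℤ, ∀ᵐ ω ∂P, X t ω = Φ *ᵥ (X (t - 1) ω) + Z t ω)
    (hstat : ∀ (t k : ℤ) (i j : Fin K),
      ∫ ω, X t ω i * X (t + k) ω j ∂P = ∫ ω, X 0 ω i * X k ω j ∂P)
    (Γ₀ C₁ : Matrix (Fin K) (Fin K) ℝ)
    (hΓ₀ : ∀ i j, Γ₀ i j = ∫ ω, X 0 ω i * X 0 ω j ∂P)
    (hΓ₀inv : IsUnit Γ₀)
    (hC₁ : ∀ i j, C₁ i j = ∫ ω, X 0 ω i * X 1 ω j ∂P) :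
    ∀ (t k : ℤ), 1 ≤ k → ∀ (i j : Fin K),
      ∫ ω, (X t ω - (C₁ * Γ₀⁻¹) *ᵥ (X (t + 1) ω)) i * X (t + k) ω j ∂P = 0 :=
  backward_residual_uncorrelated_with_future_general P K Z hZindep hmean hZL2 Φ X hXmeas hconvL2
    hrec hstat Γ₀ C₁ hΓ₀ hΓ₀inv hC₁
end

section
/- Let K, p, q ≥ 1 and let Φ₁, …, Φ_p, Θ₁, …, Θ_q be K×K matrices over a commutative ring R (e.g. over ℝ or ℂ). Define the K(p+q)×K(p+q) block matrix Υ = [[Υ₁₁, Υ₁₂], [0, Υ₂₂]], where: Υ₁₁ is the Kp×Kp block matrix whose first block row is (Φ₁, Φ₂, …, Φ_p), with K×K identity blocks on the block subdiagonal and zero blocks elsewhere; Υ₁₂ is the Kp×Kq block matrix whose first block row is (Θ₁, …, Θ_q) and whose remaining blocks are zero; and Υ₂₂ is the Kq×Kq block matrix with K×K identity blocks on the block subdiagonal and zero blocks elsewhere. Then for every z ∈ R: det(1_{K(p+q)} − zΥ) = det(1_K − zΦ₁ − z²Φ₂ − ⋯ − z^pΦ_p). -/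
/-!
Off its first block row, `1 - z • Υ` agrees with `S ⊗ₖ 1`, where `S = 1 - z • varmaShift` and
`varmaShift` shifts block indices down by one, except that it is broken between the AR and the MA
part (block row `p` of `Υ` is zero). `S` is unit lower triangular, so multiplying `1 - z • Υ` on
the right by `S⁻¹ ⊗ₖ 1` preserves the determinant and turns every block row except the first into
a row of the identity. What is left is the `(0, 0)` block `∑ b, v b • (1 - z • Υ)₀ᵦ` with
`v = S⁻¹ e₀ = (1, z, …, z ^ (p - 1), 0, …, 0)`, and this block is `1 - ∑ m, z ^ (m + 1) • Φ m`.
-/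

open Matrix

/-- The companion coefficient matrix `Υ` of the VAR(1) representation of a `K`-dimensional
VARMA(p,q) process, as a `K(p+q) × K(p+q)` matrix indexed by block index in `Fin (p+q)` and
within-block index in `Fin K`.  Block row `0` is `(Φ₁, …, Φ_p, Θ₁, …, Θ_q)`; block rows
`1, …, p-1` and `p+1, …, p+q-1` carry `K × K` identity blocks on the block subdiagonal;
all other blocks (in particular all of block row `p`, the first block row of `Υ₂₂`, and the
lower-left block) are zero. -/
def varmaCompanion (R : Type*) [CommRing R] (K p q : ℕ)
    (Φ : Fin p → Matrix (Fin K) (Fin K) R) (Θ : Fin q → Matrix (Fin K) (Fin K) R) :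
    Matrix (Fin (p + q) × Fin K) (Fin (p + q) × Fin K) R :=
  fun a b =>
    if a.1.val = 0 then
      (if h : b.1.val < p then Φ ⟨b.1.val, h⟩ a.2 b.2
       else Θ ⟨b.1.val - p, by have := b.1.isLt; omega⟩ a.2 b.2)
    else if a.1.val ≠ p ∧ b.1.val + 1 = a.1.val then (if a.2 = b.2 then 1 else 0)
    else 0

open scoped Kronecker

namespace Matrix

variable {R α ι : Type*} [CommRing R] [Fintype α] [DecidableEq α] [Fintype ι] [DecidableEq ι]

theorem det_eq_det_submatrix_of_row_eq_one (T : Matrix (α × ι) (α × ι) R) (a₀ : α)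
    (hT : ∀ x : α × ι, x.1 ≠ a₀ → T x = (1 : Matrix (α × ι) (α × ι) R) x) :
    T.det = (T.submatrix (Prod.mk a₀) (Prod.mk a₀)).det := by
  rw [T.twoBlockTriangular_det (fun x => x.1 = a₀) fun x hx y hy => by
    rw [hT x hx, one_apply_ne (by rintro rfl; exact hx hy)]]
  have hrest : toSquareBlockProp T (fun x => ¬x.1 = a₀) = 1 := by
    ext x y
    rw [toSquareBlockProp_def, of_apply, hT x x.2, one_apply, one_apply]
    simp only [Subtype.ext_iff]
  let e : ι ≃ {x : α × ι // x.1 = a₀} :=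
    ⟨fun i => ⟨(a₀, i), rfl⟩, fun x => x.1.2, fun _ => rfl, fun ⟨⟨_, _⟩, h⟩ => by subst h; rfl⟩
  rw [hrest, det_one, mul_one, ← det_submatrix_equiv_self e]
  rfl

theorem det_eq_det_pow_mul_det_sum_of_row_eq_kronecker (N : Matrix (α × ι) (α × ι) R)
    (S : Matrix α α R) (hS : IsUnit S.det) (a₀ : α) (v : α → R) (hv : S *ᵥ v = Pi.single a₀ 1)
    (hN : ∀ x : α × ι, x.1 ≠ a₀ → N x = (S ⊗ₖ (1 : Matrix ι ι R)) x) :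
    N.det = S.det ^ Fintype.card ι *
      (∑ a, v a • N.submatrix (Prod.mk a₀) (Prod.mk a)).det := by
  set T := N * (S⁻¹ ⊗ₖ (1 : Matrix ι ι R)) with hTdef
  have hrow : ∀ x : α × ι, x.1 ≠ a₀ → T x = (1 : Matrix (α × ι) (α × ι) R) x := by
    intro x hx
    rw [← one_kronecker_one, ← mul_nonsing_inv S hS, ← mul_one (1 : Matrix ι ι R),
      mul_kronecker_mul]
    ext y
    simp only [T, mul_apply, hN x hx]
  have hcol : ∀ a, S⁻¹ a a₀ = v a := congrFun <| show S⁻¹.col a₀ = v by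
    rw [← mulVec_single_one, ← hv, mulVec_mulVec, nonsing_inv_mul S hS, one_mulVec]
  have hblock : T.submatrix (Prod.mk a₀) (Prod.mk a₀) =
      ∑ a, v a • N.submatrix (Prod.mk a₀) (Prod.mk a) := by
    ext i j
    simp [T, mul_apply, Fintype.sum_prod_type, one_apply, hcol, sum_apply, mul_comm]
  have hdetT : T.det = N.det * S⁻¹.det ^ Fintype.card ι := by
    rw [hTdef, det_mul, det_kronecker, det_one, one_pow, mul_one]
  have hinv : S.det * S⁻¹.det = 1 := by rw [← det_mul, mul_nonsing_inv S hS, det_one]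
  calc N.det = N.det * (S.det * S⁻¹.det) ^ Fintype.card ι := by rw [hinv, one_pow, mul_one]
    _ = S.det ^ Fintype.card ι * T.det := by rw [hdetT]; ring
    _ = _ := by rw [det_eq_det_submatrix_of_row_eq_one T a₀ hrow, hblock]

end Matrix

section VARMA

variable (R : Type*) [CommRing R] {K : ℕ} (p q : ℕ)

def varmaShift : Matrix (Fin (p + q)) (Fin (p + q)) R :=
  of fun a b => if a.val ≠ p ∧ b.val + 1 = a.val then 1 else 0

variable {R p q}

theorem one_sub_smul_varmaCompanion_row_eq_kronecker [NeZero p] (z : R)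
    (Φ : Fin p → Matrix (Fin K) (Fin K) R) (Θ : Fin q → Matrix (Fin K) (Fin K) R)
    (x : Fin (p + q) × Fin K) (hx : x.1 ≠ 0) :
    (1 - z • varmaCompanion R K p q Φ Θ) x =
      ((1 - z • varmaShift R p q) ⊗ₖ (1 : Matrix (Fin K) (Fin K) R)) x := by
  obtain ⟨a, i⟩ := x
  have ha : a.val ≠ 0 := Fin.val_ne_zero_iff.mpr hx
  ext ⟨b, j⟩
  by_cases hij : i = j <;> simp [varmaCompanion, varmaShift, ha, one_apply, hij]

theorem det_one_sub_smul_varmaShift (z : R) : (1 - z • varmaShift R p q).det = 1 := by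
  rw [det_of_isLowerTriangular]
  · simp [varmaShift]
  · intro a b hab
    have hab : a.val < b.val := hab
    rw [Matrix.sub_apply, one_apply_ne (Fin.ne_of_val_ne hab.ne), Matrix.smul_apply, varmaShift,
      of_apply, if_neg (by omega), smul_zero, sub_zero]

theorem one_sub_smul_varmaShift_mulVec [NeZero p] (z : R) :
    (1 - z • varmaShift R p q) *ᵥ (fun b => if b.val < p then z ^ b.val else 0) =
      Pi.single 0 1 := by
  have hp : 0 < p := Nat.pos_of_neZero p
  ext ⟨a, ha⟩
  rw [sub_mulVec, one_mulVec, smul_mulVec, Pi.sub_apply, Pi.smul_apply, mulVec, dotProduct]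
  rcases a with _ | n
  · simp [varmaShift, hp]
  · have hne : (⟨n + 1, ha⟩ : Fin (p + q)) ≠ 0 := Fin.ne_of_val_ne n.succ_ne_zero
    rw [Finset.sum_eq_single (⟨n, by omega⟩ : Fin (p + q))
      (fun b _ hb => by simp [varmaShift, Fin.ext_iff] at hb ⊢; omega) (by simp)]
    simp only [varmaShift, of_apply, Pi.single_apply, hne, if_false, and_true, smul_eq_mul]
    split_ifs <;> first | omega | ring

theorem sum_smul_submatrix_one_sub_smul_varmaCompanion [NeZero p] (z : R)
    (Φ : Fin p → Matrix (Fin K) (Fin K) R) (Θ : Fin q → Matrix (Fin K) (Fin K) R) :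
    ∑ b : Fin (p + q), (if b.val < p then z ^ b.val else 0) •
        (1 - z • varmaCompanion R K p q Φ Θ).submatrix (Prod.mk 0) (Prod.mk b) =
      1 - ∑ m : Fin p, z ^ (m.val + 1) • Φ m := by
  have hblock : ∀ m : Fin p,
      (1 - z • varmaCompanion R K p q Φ Θ).submatrix (Prod.mk 0) (Prod.mk (Fin.castAdd q m)) =
        (if m = 0 then 1 else 0) - z • Φ m := by
    intro m
    ext i j
    have hcast : (0 : Fin (p + q)) = Fin.castAdd q m ↔ m = 0 := by
      rw [Fin.ext_iff, Fin.ext_iff, Fin.val_castAdd, Fin.val_zero, Fin.val_zero, eq_comm]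
    simp only [varmaCompanion, Matrix.sub_apply, Matrix.smul_apply, submatrix_apply, one_apply,
      Prod.mk.injEq, hcast, Fin.val_zero, if_true, Fin.val_castAdd, m.isLt, dite_true, Fin.eta]
    by_cases hm : m = 0 <;> simp [one_apply, hm]
  simp only [Fin.sum_univ_add, Fin.val_castAdd, Fin.val_natAdd, Fin.is_lt, if_true, hblock]
  simp [smul_sub, Finset.sum_sub_distrib, smul_smul, pow_succ]

end VARMA

theorem det_one_sub_smul_varmaCompanion_general
    (R : Type*) [CommRing R] (K p q : ℕ) (hp : 1 ≤ p)
    (Φ : Fin p → Matrix (Fin K) (Fin K) R) (Θ : Fin q → Matrix (Fin K) (Fin K) R)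
    (z : R) :
    ((1 : Matrix (Fin (p + q) × Fin K) (Fin (p + q) × Fin K) R)
        - z • varmaCompanion R K p q Φ Θ).det
      = ((1 : Matrix (Fin K) (Fin K) R) - ∑ m : Fin p, z ^ (m.val + 1) • Φ m).det := by
  have : NeZero p := ⟨by omega⟩
  have hS : (1 - z • varmaShift R p q).det = 1 := det_one_sub_smul_varmaShift z
  rw [det_eq_det_pow_mul_det_sum_of_row_eq_kronecker _ _ (hS ▸ isUnit_one) 0 _
    (one_sub_smul_varmaShift_mulVec z) (one_sub_smul_varmaCompanion_row_eq_kronecker z Φ Θ),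
    hS, one_pow, one_mul, sum_smul_submatrix_one_sub_smul_varmaCompanion]

/-- determinant identity for the VAR(1) companion matrix of a VARMA(p,q) process:
`det (1 - z Υ) = det (1 - z Φ₁ - z² Φ₂ - ⋯ - z^p Φ_p)`. -/
theorem det_one_sub_smul_varmaCompanion
    (R : Type*) [CommRing R] (K p q : ℕ) (hK : 1 ≤ K) (hp : 1 ≤ p) (hq : 1 ≤ q)
    (Φ : Fin p → Matrix (Fin K) (Fin K) R) (Θ : Fin q → Matrix (Fin K) (Fin K) R)
    (z : R) :
    ((1 : Matrix (Fin (p + q) × Fin K) (Fin (p + q) × Fin K) R)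
        - z • varmaCompanion R K p q Φ Θ).det
      = ((1 : Matrix (Fin K) (Fin K) R) - ∑ m : Fin p, z ^ (m.val + 1) • Φ m).det :=
  det_one_sub_smul_varmaCompanion_general R K p q hp Φ Θ z
end
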